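/- Let b>0, a<0, c<0 with 2b < −a−c, let p = p₁/p₂ ≥ 1 be a rational with p₁, p₂ odd and coprime, and let [α,β] be a compact subinterval of (0, min{1, √(ac)/b}). There exists a constant C > 0 such that for all α ≤ ω₁ < ω₂ ≤ β and all minimizers (ψ_{ω_i}, v_{ω_i}) ∈ 𝓖_{ω_i} (i = 1,2): d(ω₁) ≤ d(ω₂) − (1/2)(2/(p+2))^{2/p}·(I_{ω₂}(ψ_{ω₂},v_{ω₂}))^{2/p}·((ω₂−ω₁)/ω₂)·I_{2,ω₂}(ψ_{ω₂},v_{ω₂}) + C(ω₂−ω₁)², and d(ω₂) ≤ d(ω₁) + (1/2)(2/(p+2))^{2/p}·(I_{ω₁}(ψ_{ω₁},v_{ω₁}))^{2/p}·((ω₂−ω₁)/ω₁)·I_{2,ω₁}(ψ_{ω₁},v_{ω₁}) + C(ω₂−ω₁)². -/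

import Mathlib

open MeasureTheory Real Filter Topology Set

noncomputable section

/-- `f` belongs to `H¹(ℝ)`: differentiable with `f, f' ∈ L²(ℝ)`. -/
def InH1 (f : ℝ → ℝ) : Prop :=
  Differentiable ℝ f ∧ MemLp f 2 (volume : Measure ℝ) ∧
    MemLp (deriv f) 2 (volume : Measure ℝ)

/-- Square of the `X = H¹ × H¹` norm. -/
def XnormSq (ψ v : ℝ → ℝ) : ℝ :=
  ∫ x : ℝ, (ψ x ^ 2 + deriv ψ x ^ 2 + v x ^ 2 + deriv v x ^ 2)

/-- Distance in `X`. -/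
def Xdist (f g : (ℝ → ℝ) × (ℝ → ℝ)) : ℝ :=
  Real.sqrt (XnormSq (fun x => f.1 x - g.1 x) (fun x => f.2 x - g.2 x))

/-- Sign-preserving (odd) real power, modelling `x^q` for rationals `q` with odd
numerator and denominator. -/
def opow (x q : ℝ) : ℝ := Real.sign x * |x| ^ q

def I1fun (a c : ℝ) (ψ v : ℝ → ℝ) : ℝ :=
  ∫ x : ℝ, (ψ x ^ 2 - c * deriv ψ x ^ 2 + v x ^ 2 - a * deriv v x ^ 2)

def I2fun (b ω : ℝ) (ψ v : ℝ → ℝ) : ℝ :=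
  -2 * ω * ∫ x : ℝ, (ψ x * v x + b * deriv ψ x * deriv v x)

def Ifun (a b c ω : ℝ) (ψ v : ℝ → ℝ) : ℝ := I1fun a c ψ v + I2fun b ω ψ v

/-- `G(ψ,v) = (2/(p+1)) ∫ ψ v^{p+1}`; since `p = p₁/p₂` with `p₁, p₂` odd, the
exponent `p+1` has even numerator and odd denominator, so `v^{p+1} = |v|^{p+1}`. -/
def Gfun (p : ℝ) (ψ v : ℝ → ℝ) : ℝ :=
  (2 / (p + 1)) * ∫ x : ℝ, ψ x * |v x| ^ (p + 1)

/-- Constrained infimum `𝓘_ω`. -/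
def Iinf (a b c ω p : ℝ) : ℝ :=
  sInf {r : ℝ | ∃ ψ v : ℝ → ℝ, InH1 ψ ∧ InH1 v ∧ Gfun p ψ v = -1 ∧
    r = Ifun a b c ω ψ v}

/-- `𝓖_ω`: the set of minimizers of `I_ω` subject to `G = -1`. -/
def Gset (a b c ω p : ℝ) : Set ((ℝ → ℝ) × (ℝ → ℝ)) :=
  {pv | InH1 pv.1 ∧ InH1 pv.2 ∧ Gfun p pv.1 pv.2 = -1 ∧
    Ifun a b c ω pv.1 pv.2 = Iinf a b c ω p}

/-- `𝓖̃_ω = ((2/(p+2)) 𝓘_ω)^{1/p} · 𝓖_ω`. -/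
def Gtilde (a b c ω p : ℝ) : Set ((ℝ → ℝ) × (ℝ → ℝ)) :=
  {qw | ∃ pv ∈ Gset a b c ω p,
    qw = (fun x => ((2 / (p + 2)) * Iinf a b c ω p) ^ (1 / p) * pv.1 x,
          fun x => ((2 / (p + 2)) * Iinf a b c ω p) ^ (1 / p) * pv.2 x)}

/-- The traveling-wave system `-ω(ψ - bψ'') + v + a v'' + ψ v^p = 0`,
`ω(-v + b v'') + ψ + c ψ'' + (1/(p+1)) v^{p+1} = 0`, for `(ψ,v) ∈ H¹ × H¹`
classical (twice continuously differentiable) solutions. -/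
def TravelingWave (a b c ω p : ℝ) (ψ v : ℝ → ℝ) : Prop :=
  InH1 ψ ∧ InH1 v ∧ ContDiff ℝ 2 ψ ∧ ContDiff ℝ 2 v ∧
  (∀ x : ℝ, -ω * (ψ x - b * iteratedDeriv 2 ψ x) + v x + a * iteratedDeriv 2 v x
      + ψ x * opow (v x) p = 0) ∧
  (∀ x : ℝ, ω * (-(v x) + b * iteratedDeriv 2 v x) + ψ x + c * iteratedDeriv 2 ψ x
      + (1 / (p + 1)) * |v x| ^ (p + 1) = 0)

/-- The Hamiltonian `𝓗`. -/
def Ham (a c p : ℝ) (η u : ℝ → ℝ) : ℝ :=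
  (1 / 2) * ∫ x : ℝ, (η x ^ 2 - c * deriv η x ^ 2 + u x ^ 2 - a * deriv u x ^ 2
      + (2 / (p + 1)) * η x * |u x| ^ (p + 1))

/-- The charge `𝓠`. -/
def charge (b : ℝ) (η u : ℝ → ℝ) : ℝ :=
  -∫ x : ℝ, (η x * u x + b * deriv η x * deriv u x)

/-- The scalar function `d(ω)`. -/
def dfun (a b c p : ℝ) (ω : ℝ) : ℝ :=
  (p / (2 * (p + 2))) * (2 / (p + 2)) ^ ((2 : ℝ) / p) *
    (Iinf a b c ω p) ^ ((p + 2) / p)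

/-- `ω(ε) = √(1 - ε^{2/(p+1)})`. -/
def omEps (p ε : ℝ) : ℝ := Real.sqrt (1 - ε ^ ((2 : ℝ) / (p + 1)))

def I1eps (a c p ε : ℝ) (z w : ℝ → ℝ) : ℝ :=
  ∫ y : ℝ, (ε ^ (-(2 : ℝ) / (p + 1)) * z y ^ 2 - c * deriv z y ^ 2
    + ε ^ (-(2 : ℝ) / (p + 1)) * w y ^ 2 - a * deriv w y ^ 2)

def I2eps (b p ε ω : ℝ) (z w : ℝ → ℝ) : ℝ :=
  -2 * ω * ∫ y : ℝ, (ε ^ (-(2 : ℝ) / (p + 1)) * z y * w y + b * deriv z y * deriv w y)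

/-- Rescaled functional `I^ε` (with `ω = ω(ε)`). -/
def Ieps (a b c p ε : ℝ) (z w : ℝ → ℝ) : ℝ :=
  I1eps a c p ε z w + I2eps b p ε (omEps p ε) z w

def IinfEps (a b c p ε : ℝ) : ℝ :=
  sInf {r : ℝ | ∃ z w : ℝ → ℝ, InH1 z ∧ InH1 w ∧ Gfun p z w = -1 ∧
    r = Ieps a b c p ε z w}

def Jeps (a b c p ε : ℝ) (w : ℝ → ℝ) : ℝ :=
  (∫ y : ℝ, ε ^ (-(2 : ℝ) / (p + 1)) * (1 - omEps p ε ^ 2) * w y ^ 2)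
    + ∫ y : ℝ, -((2 * b + c) * omEps p ε ^ 2 + a) * deriv w y ^ 2

def Keps (p ε : ℝ) (w : ℝ → ℝ) : ℝ := Gfun p (fun x => omEps p ε * w x) w

def JinfEps (a b c p ε : ℝ) : ℝ :=
  sInf {r : ℝ | ∃ w : ℝ → ℝ, InH1 w ∧ Keps p ε w = -1 ∧ r = Jeps a b c p ε w}

def J0fun (σ : ℝ) (w : ℝ → ℝ) : ℝ :=
  ∫ y : ℝ, (w y ^ 2 + (σ - 1 / 3) * deriv w y ^ 2)

/-- `K⁰(w) = (2/(p+1)) ∫ w^{p+2}`; the exponent `p+2` has odd numerator and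
odd denominator, so `w^{p+2}` is the sign-preserving power. -/
def K0fun (p : ℝ) (w : ℝ → ℝ) : ℝ :=
  (2 / (p + 1)) * ∫ y : ℝ, opow (w y) (p + 2)

def Jinf0 (σ p : ℝ) : ℝ :=
  sInf {r : ℝ | ∃ w : ℝ → ℝ, InH1 w ∧ K0fun p w = -1 ∧ r = J0fun σ w}

/-- The Beta function `B(x,y) = ∫₀¹ t^{x-1}(1-t)^{y-1} dt`. -/
def betaFn (x y : ℝ) : ℝ := ∫ t in (0 : ℝ)..1, t ^ (x - 1) * (1 - t) ^ (y - 1)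


section AuxLemmas

set_option maxHeartbeats 1000000

lemma int_mul {f g : ℝ → ℝ} (hf : MemLp f 2 (volume : Measure ℝ))
    (hg : MemLp g 2 (volume : Measure ℝ)) :
    Integrable (fun x => f x * g x) (volume : Measure ℝ) := by
  have h := hg.smul (p := 2) (q := 2) (r := 1) hf
  exact memLp_one_iff_integrable.mp h

lemma int_sq {f : ℝ → ℝ} (hf : MemLp f 2 (volume : Measure ℝ)) :
    Integrable (fun x => f x ^ 2) (volume : Measure ℝ) := by
  simpa [sq] using int_mul hf hf

lemma XnormSq_nonneg (ψ v : ℝ → ℝ) : 0 ≤ XnormSq ψ v :=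
  integral_nonneg fun x => by positivity

lemma Ifun_shift (a b c ω ω' : ℝ) (hω' : ω' ≠ 0) (ψ v : ℝ → ℝ) :
    Ifun a b c ω ψ v = Ifun a b c ω' ψ v - (ω' - ω) / ω' * I2fun b ω' ψ v := by
  unfold Ifun I2fun
  field_simp
  ring

lemma Ifun_affine (a b c ω : ℝ) (ψ v : ℝ → ℝ) :
    Ifun a b c ω ψ v = I1fun a c ψ v + ω * I2fun b 1 ψ v := by
  unfold Ifun I2fun
  ring

lemma pointwise_coer {a b c ω β t : ℝ} (hb : 0 < b) (ht : 0 < t)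
    (hω0 : 0 ≤ ω) (hωβ : ω ≤ β) (P X V Y : ℝ) :
    (1 - β) * P ^ 2 + (-c - β * b * t) * X ^ 2 + (1 - β) * V ^ 2
        + (-a - β * b / t) * Y ^ 2
      ≤ (P ^ 2 - c * X ^ 2 + V ^ 2 - a * Y ^ 2) + (-2 * ω) * (P * V + b * X * Y) := by
  have hb0 : (0:ℝ) ≤ ω * b := mul_nonneg hω0 hb.le
  have key : 2 * (X * Y) ≤ t * X ^ 2 + Y ^ 2 / t := by
    have expand : t * X ^ 2 + Y ^ 2 / t - 2 * (X * Y) = (t * X - Y) ^ 2 / t := by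
      field_simp; ring
    nlinarith [div_nonneg (sq_nonneg (t * X - Y)) ht.le]
  have f1 : 2 * ω * (P * V) ≤ β * (P ^ 2 + V ^ 2) := by
    nlinarith [mul_nonneg hω0 (sq_nonneg (P - V)),
      mul_le_mul_of_nonneg_right hωβ (by positivity : (0:ℝ) ≤ P ^ 2 + V ^ 2)]
  have h1 : 2 * (ω * b) * (X * Y) ≤ (ω * b) * (t * X ^ 2 + Y ^ 2 / t) := by
    have := mul_le_mul_of_nonneg_left key hb0
    linarith
  have h2 : (ω * b) * (t * X ^ 2 + Y ^ 2 / t) ≤ (β * b) * (t * X ^ 2 + Y ^ 2 / t) := by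
    apply mul_le_mul_of_nonneg_right (mul_le_mul_of_nonneg_right hωβ hb.le)
    have : (0:ℝ) ≤ Y ^ 2 / t := div_nonneg (sq_nonneg Y) ht.le
    nlinarith [sq_nonneg X]
  have hfin : 2 * ω * b * (X * Y) ≤ β * b * t * X ^ 2 + β * b / t * Y ^ 2 := by
    have h3 : (β * b) * (t * X ^ 2 + Y ^ 2 / t) = β * b * t * X ^ 2 + β * b / t * Y ^ 2 := by
      ring
    nlinarith [h1, h2]
  nlinarith [f1, hfin]

lemma pointwise_abs {b : ℝ} (hb : 0 < b) (P X V Y : ℝ) :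
    |P * V + b * X * Y| ≤ max 1 b / 2 * (P ^ 2 + X ^ 2 + V ^ 2 + Y ^ 2) := by
  have h1 : |P * V| ≤ (P ^ 2 + V ^ 2) / 2 := by
    rw [abs_mul]
    nlinarith [sq_nonneg (|P| - |V|), sq_abs P, sq_abs V]
  have h2 : |X * Y| ≤ (X ^ 2 + Y ^ 2) / 2 := by
    rw [abs_mul]
    nlinarith [sq_nonneg (|X| - |Y|), sq_abs X, sq_abs Y]
  have h3 : |P * V + b * X * Y| ≤ |P * V| + b * |X * Y| := by
    calc |P * V + b * X * Y| ≤ |P * V| + |b * (X * Y)| := by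
          rw [show b * X * Y = b * (X * Y) by ring] at *
          exact abs_add_le _ _
      _ = |P * V| + b * |X * Y| := by rw [abs_mul (b) (X*Y), abs_of_pos hb]
  have m1 : (P ^ 2 + V ^ 2) * 1 ≤ (P ^ 2 + V ^ 2) * max 1 b :=
    mul_le_mul_of_nonneg_left (le_max_left 1 b) (by positivity)
  have m2 : (X ^ 2 + Y ^ 2) * b ≤ (X ^ 2 + Y ^ 2) * max 1 b :=
    mul_le_mul_of_nonneg_left (le_max_right 1 b) (by positivity)
  nlinarith [mul_le_mul_of_nonneg_left h2 hb.le]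

lemma coercive {a b c β t ε : ℝ} (hb : 0 < b) (ht : 0 < t)
    (hε1 : ε ≤ 1 - β) (hεX : ε ≤ -c - β * b * t) (hεY : ε ≤ -a - β * b / t)
    {ω : ℝ} (hω0 : 0 ≤ ω) (hωβ : ω ≤ β) {ψ v : ℝ → ℝ} (hψ : InH1 ψ) (hv : InH1 v) :
    ε * XnormSq ψ v ≤ Ifun a b c ω ψ v := by
  obtain ⟨-, hψ2, hψ'2⟩ := hψ
  obtain ⟨-, hv2, hv'2⟩ := hv
  have hIψ2 := int_sq hψ2
  have hIψ'2 := int_sq hψ'2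
  have hIv2 := int_sq hv2
  have hIv'2 := int_sq hv'2
  have hIψv := int_mul hψ2 hv2
  have hIdd := int_mul hψ'2 hv'2
  have hF : Integrable (fun x => ψ x ^ 2 - c * deriv ψ x ^ 2 + v x ^ 2
      - a * deriv v x ^ 2) (volume : Measure ℝ) :=
    ((hIψ2.sub (hIψ'2.const_mul c)).add hIv2).sub (hIv'2.const_mul a)
  have hG : Integrable (fun x => ψ x * v x + b * deriv ψ x * deriv v x)
      (volume : Measure ℝ) :=
    hIψv.add (by simpa [mul_assoc] using hIdd.const_mul b)
  have hN : Integrable (fun x => ψ x ^ 2 + deriv ψ x ^ 2 + v x ^ 2 + deriv v x ^ 2)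
      (volume : Measure ℝ) := ((hIψ2.add hIψ'2).add hIv2).add hIv'2
  have hIfun : Ifun a b c ω ψ v = ∫ x : ℝ,
      ((ψ x ^ 2 - c * deriv ψ x ^ 2 + v x ^ 2 - a * deriv v x ^ 2)
        + (-2 * ω) * (ψ x * v x + b * deriv ψ x * deriv v x)) := by
    unfold Ifun I1fun I2fun
    rw [integral_add hF (hG.const_mul (-2 * ω)), integral_const_mul]
  have hXn : ε * XnormSq ψ v = ∫ x : ℝ,
      ε * (ψ x ^ 2 + deriv ψ x ^ 2 + v x ^ 2 + deriv v x ^ 2) := by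
    unfold XnormSq
    rw [integral_const_mul]
  rw [hIfun, hXn]
  apply integral_mono (hN.const_mul ε) (hF.add (hG.const_mul (-2 * ω)))
  intro x
  simp only [Pi.add_apply]
  have hp := pointwise_coer (a := a) (c := c) hb ht hω0 hωβ (ψ x) (deriv ψ x) (v x) (deriv v x)
  nlinarith [mul_le_mul_of_nonneg_right hε1 (sq_nonneg (ψ x)),
    mul_le_mul_of_nonneg_right hε1 (sq_nonneg (v x)),
    mul_le_mul_of_nonneg_right hεX (sq_nonneg (deriv ψ x)),
    mul_le_mul_of_nonneg_right hεY (sq_nonneg (deriv v x))]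

lemma I2_bound {b β : ℝ} (hb : 0 < b) {ω : ℝ} (hω0 : 0 ≤ ω) (hωβ : ω ≤ β)
    {ψ v : ℝ → ℝ} (hψ : InH1 ψ) (hv : InH1 v) :
    |I2fun b ω ψ v| ≤ β * max 1 b * XnormSq ψ v := by
  obtain ⟨-, hψ2, hψ'2⟩ := hψ
  obtain ⟨-, hv2, hv'2⟩ := hv
  have hG : Integrable (fun x => ψ x * v x + b * deriv ψ x * deriv v x)
      (volume : Measure ℝ) :=
    (int_mul hψ2 hv2).add (by simpa [mul_assoc] using (int_mul hψ'2 hv'2).const_mul b)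
  have hN : Integrable (fun x => ψ x ^ 2 + deriv ψ x ^ 2 + v x ^ 2 + deriv v x ^ 2)
      (volume : Measure ℝ) :=
    ((int_sq hψ2).add (int_sq hψ'2)).add ((int_sq hv2)) |>.add (int_sq hv'2)
  have hJ : |∫ x : ℝ, (ψ x * v x + b * deriv ψ x * deriv v x)|
      ≤ ∫ x : ℝ, |ψ x * v x + b * deriv ψ x * deriv v x| := by
    simpa [Real.norm_eq_abs] using
      norm_integral_le_integral_norm (fun x => ψ x * v x + b * deriv ψ x * deriv v x)
  have habs : ∫ x : ℝ, |ψ x * v x + b * deriv ψ x * deriv v x|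
      ≤ ∫ x : ℝ, max 1 b / 2 * (ψ x ^ 2 + deriv ψ x ^ 2 + v x ^ 2 + deriv v x ^ 2) := by
    apply integral_mono hG.abs (hN.const_mul _)
    intro x
    exact pointwise_abs hb (ψ x) (deriv ψ x) (v x) (deriv v x)
  rw [show (∫ x : ℝ, max 1 b / 2 * (ψ x ^ 2 + deriv ψ x ^ 2 + v x ^ 2 + deriv v x ^ 2))
      = max 1 b / 2 * XnormSq ψ v from integral_const_mul _ _] at habs
  unfold I2fun
  rw [abs_mul, show |(-2 : ℝ) * ω| = 2 * ω by rw [abs_mul]; simp [abs_of_nonneg hω0]]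
  have hXn := XnormSq_nonneg ψ v
  have hmax : (1:ℝ) ≤ max 1 b := le_max_left 1 b
  nlinarith [abs_nonneg (∫ x : ℝ, (ψ x * v x + b * deriv ψ x * deriv v x)),
    mul_le_mul_of_nonneg_left (le_trans hJ habs) (mul_nonneg (by norm_num : (0:ℝ) ≤ 2) hω0),
    mul_le_mul_of_nonneg_right hωβ (mul_nonneg (le_trans zero_le_one hmax) hXn)]

lemma bernoulli_quad {q t : ℝ} (hq1 : 1 ≤ q) (hq3 : q ≤ 3) (ht : |t| ≤ 1 / 5) :
    (1 + t) ^ q ≤ 1 + q * t + 29 * t ^ 2 := by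
  obtain ⟨ht1, ht2⟩ := abs_le.mp ht
  have hd0 : (0:ℝ) < 1 + t := by linarith
  obtain ⟨x, hxs⟩ : ∃ x : ℝ, x = q * t / (1 + t) := ⟨_, rfl⟩
  have hxd : x * (1 + t) = q * t := by rw [hxs]; field_simp
  have hs : (-1:ℝ) ≤ -t / (1 + t) := by
    rw [neg_div, neg_le_neg_iff, div_le_one hd0]; linarith
  have hber := one_add_mul_self_le_rpow_one_add hs hq1
  have h1td : 1 + -t / (1 + t) = 1 / (1 + t) := by field_simp; ring
  rw [h1td, one_div, Real.inv_rpow hd0.le] at hber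
  have hqs : q * (-t / (1 + t)) = -x := by rw [hxs]; ring
  rw [hqs] at hber
  have hber2 : 1 - x ≤ ((1 + t) ^ q)⁻¹ := by linarith
  have hdq0 : (0:ℝ) < (1 + t) ^ q := Real.rpow_pos_of_pos hd0 q
  have hq0 : (0:ℝ) ≤ q := by linarith
  have hx12 : x ≤ 1 / 2 := by
    rw [hxs, div_le_iff₀ hd0]
    rcases le_or_gt t 0 with h' | h'
    · nlinarith [mul_nonpos_of_nonneg_of_nonpos hq0 h']
    · nlinarith
  have hxle : x ≤ q * t := by
    rw [hxs, div_le_iff₀ hd0]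
    nlinarith [mul_nonneg hq0 (sq_nonneg t)]
  have hx2 : 2 * x ^ 2 ≤ 29 * t ^ 2 := by
    have h1 : x ^ 2 * (1 + t) ^ 2 = q ^ 2 * t ^ 2 := by nlinarith [hxd]
    nlinarith [sq_nonneg x, sq_nonneg t, sq_nonneg (q * t)]
  have hx1 : (0:ℝ) < 1 - x := by linarith
  have hstep : (1 + t) ^ q * (1 - x) ≤ 1 := by
    calc (1 + t) ^ q * (1 - x) ≤ (1 + t) ^ q * ((1 + t) ^ q)⁻¹ :=
          mul_le_mul_of_nonneg_left hber2 hdq0.le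
      _ = 1 := mul_inv_cancel₀ hdq0.ne'
  have hquad : 1 ≤ (1 + x + 2 * x ^ 2) * (1 - x) := by nlinarith [sq_nonneg x]
  have hfin : (1 + t) ^ q ≤ 1 + x + 2 * x ^ 2 :=
    le_of_mul_le_mul_right
      (by linarith : (1 + t) ^ q * (1 - x) ≤ (1 + x + 2 * x ^ 2) * (1 - x)) hx1
  linarith

lemma rpow_taylor {q u h : ℝ} (hq1 : 1 ≤ q) (hq3 : q ≤ 3) (hu : 0 < u) (hh : |h| ≤ u / 5) :
    (u + h) ^ q ≤ u ^ q + q * u ^ (q - 1) * h + 29 * u ^ (q - 2) * h ^ 2 := by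
  have hu' : u ≠ 0 := hu.ne'
  have ht : |h / u| ≤ 1 / 5 := by
    rw [abs_div, abs_of_pos hu, div_le_div_iff₀ hu (by norm_num)]
    linarith [hh]
  have hcore := bernoulli_quad hq1 hq3 ht
  have hd0 : (0:ℝ) < 1 + h / u := by
    obtain ⟨h1, _⟩ := abs_le.mp ht; linarith
  have hsplit : (u + h) ^ q = u ^ q * (1 + h / u) ^ q := by
    rw [← Real.mul_rpow hu.le hd0.le]
    congr 1; field_simp
  have huq : (0:ℝ) < u ^ q := Real.rpow_pos_of_pos hu q
  have h1 : u ^ (q - 1) = u ^ q / u := by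
    rw [Real.rpow_sub hu, Real.rpow_one]
  have h2 : u ^ (q - 2) = u ^ q / u ^ 2 := by
    rw [Real.rpow_sub hu]
    norm_num
  rw [hsplit, h1, h2]
  have := mul_le_mul_of_nonneg_left hcore huq.le
  calc u ^ q * (1 + h / u) ^ q ≤ u ^ q * (1 + q * (h / u) + 29 * (h / u) ^ 2) := this
    _ = u ^ q + q * (u ^ q / u) * h + 29 * (u ^ q / u ^ 2) * h ^ 2 := by
        field_simp

lemma core_est {k q C K al β M' u v δ Δ : ℝ}
    (hk : 0 < k) (hq1 : 1 ≤ q) (hq3 : q ≤ 3)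
    (hal : 0 < al) (hK : 0 < K) (hM' : 1 ≤ M') (hβ : 0 < β)
    (hu : 0 ≤ u) (hv : 0 ≤ v) (hvM : v ≤ M') (huM : u ≤ M')
    (hΔ : 0 < Δ) (hΔβ : Δ ≤ β)
    (hle : u ≤ v + δ) (hδ : |δ| ≤ Δ / al * K * v)
    (hC0 : 0 ≤ C)
    (hC1 : k * M' ^ 3 * (1 + 3 * K * β / al) ≤ C * (al / (5 * K)) ^ 2)
    (hC2 : 29 * k * (K / al) ^ 2 * M' ^ 3 ≤ C) :
    k * u ^ q ≤ k * v ^ q + k * q * v ^ (q - 1) * δ + C * Δ ^ 2 := by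
  have hq0 : (0:ℝ) ≤ q := by linarith
  have hq10 : (0:ℝ) ≤ q - 1 := by linarith
  have hM0 : (0:ℝ) < M' := lt_of_lt_of_le one_pos hM'
  have hM3 : M' ^ q ≤ M' ^ 3 := by
    have h := Real.rpow_le_rpow_of_exponent_le hM' hq3
    rwa [show ((3:ℝ) = ((3:ℕ):ℝ)) by norm_num, Real.rpow_natCast] at h
  have hM2 : M' ^ (q - 1) ≤ M' ^ 2 := by
    have h := Real.rpow_le_rpow_of_exponent_le hM' (by linarith : q - 1 ≤ (2:ℝ))
    rwa [show ((2:ℝ) = ((2:ℕ):ℝ)) by norm_num, Real.rpow_natCast] at h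
  have huq : u ^ q ≤ M' ^ 3 := le_trans (Real.rpow_le_rpow hu huM hq0) hM3
  have hvq1 : v ^ (q - 1) ≤ M' ^ 2 := le_trans (Real.rpow_le_rpow hv hvM hq10) hM2
  have hvq0 : (0:ℝ) ≤ v ^ (q - 1) := Real.rpow_nonneg hv _
  have hvq : (0:ℝ) ≤ v ^ q := Real.rpow_nonneg hv _
  rcases le_or_gt Δ (al / (5 * K)) with hsmall | hlarge
  · rcases eq_or_lt_of_le hv with heq | hvpos
    · have hδ0 : δ = 0 := by
        have h1 : |δ| ≤ 0 := by rw [← heq] at hδ; simpa using hδ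
        simpa using le_antisymm h1 (abs_nonneg δ)
      have hu0 : u = 0 := le_antisymm (by rw [← heq, hδ0, add_zero] at hle; exact hle) hu
      rw [hu0, ← heq, hδ0, Real.zero_rpow (by linarith : q ≠ 0)]
      have : (0:ℝ) ≤ C * Δ ^ 2 := mul_nonneg hC0 (sq_nonneg Δ)
      simp only [mul_zero, zero_add, mul_zero]
      nlinarith
    · have hδm : |δ| ≤ v / 5 := by
        have hsmall' : Δ * (5 * K) ≤ al := (le_div_iff₀ (by positivity)).mp hsmall
        have : Δ / al * K * v ≤ v / 5 := by
          rw [div_mul_eq_mul_div, div_mul_eq_mul_div, div_le_div_iff₀ hal (by norm_num)]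
          nlinarith [mul_le_mul_of_nonneg_right hsmall' hv]
        linarith [hδ]
      have htay := rpow_taylor hq1 hq3 hvpos hδm
      have hmono : u ^ q ≤ (v + δ) ^ q := Real.rpow_le_rpow hu hle hq0
      have hsum : v ^ (q - 2) * v ^ (2:ℝ) = v ^ q := by
        rw [← Real.rpow_add hvpos]; norm_num
      have hv2 : v ^ (2:ℝ) = v ^ 2 := by
        rw [show ((2:ℝ) = ((2:ℕ):ℝ)) by norm_num, Real.rpow_natCast]
      have hδ2 : δ ^ 2 ≤ (Δ / al * K) ^ 2 * v ^ 2 := by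
        have h := mul_self_le_mul_self (abs_nonneg δ) hδ
        rw [abs_mul_abs_self] at h
        calc δ ^ 2 = δ * δ := sq δ
          _ ≤ (Δ / al * K * v) * (Δ / al * K * v) := h
          _ = (Δ / al * K) ^ 2 * v ^ 2 := by ring
      have hrem : v ^ (q - 2) * δ ^ 2 ≤ (K / al) ^ 2 * M' ^ 3 * Δ ^ 2 := by
        have hvq2 : (0:ℝ) ≤ v ^ (q - 2) := Real.rpow_nonneg hv _
        have h1 : v ^ (q - 2) * δ ^ 2 ≤ v ^ (q - 2) * ((Δ / al * K) ^ 2 * v ^ 2) :=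
          mul_le_mul_of_nonneg_left hδ2 hvq2
        have h2 : v ^ (q - 2) * ((Δ / al * K) ^ 2 * v ^ 2)
            = (K / al) ^ 2 * (v ^ (q - 2) * v ^ (2:ℝ)) * Δ ^ 2 := by
          rw [hv2]; ring
        rw [h2, hsum] at h1
        have h3 : v ^ q ≤ M' ^ 3 := le_trans (Real.rpow_le_rpow hv hvM hq0) hM3
        have h4 : (K / al) ^ 2 * v ^ q * Δ ^ 2 ≤ (K / al) ^ 2 * M' ^ 3 * Δ ^ 2 :=
          mul_le_mul_of_nonneg_right
            (mul_le_mul_of_nonneg_left h3 (by positivity)) (sq_nonneg Δ)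
        linarith [h1, h4]
      have hC2' : 29 * k * (K / al) ^ 2 * M' ^ 3 * Δ ^ 2 ≤ C * Δ ^ 2 :=
        mul_le_mul_of_nonneg_right hC2 (sq_nonneg Δ)
      linarith [mul_le_mul_of_nonneg_left hmono hk.le,
        mul_le_mul_of_nonneg_left htay hk.le,
        mul_le_mul_of_nonneg_left hrem (by positivity : (0:ℝ) ≤ 29 * k),
        hC2']
  · have hvδ : |δ| ≤ Δ / al * K * M' :=
      le_trans hδ (mul_le_mul_of_nonneg_left hvM (by positivity))
    have hA0 : (0:ℝ) ≤ k * q * v ^ (q - 1) := by positivity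
    have hAb : k * q * v ^ (q - 1) ≤ 3 * k * M' ^ 2 := by
      have h1 : k * q * v ^ (q - 1) ≤ k * q * M' ^ 2 :=
        mul_le_mul_of_nonneg_left hvq1 (by positivity)
      nlinarith [mul_nonneg (mul_nonneg hk.le (sub_nonneg.mpr hq3)) (sq_nonneg M')]
    have e1 : -(k * q * v ^ (q - 1) * δ) ≤ k * q * v ^ (q - 1) * |δ| := by
      linarith [mul_le_mul_of_nonneg_left (neg_le_abs δ) hA0]
    have h3k : (0:ℝ) ≤ 3 * k * M' ^ 2 := by positivity
    have e2 : k * q * v ^ (q - 1) * |δ| ≤ 3 * k * M' ^ 2 * (Δ / al * K * M') := by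
      have e2a : k * q * v ^ (q - 1) * |δ| ≤ 3 * k * M' ^ 2 * |δ| :=
        mul_le_mul_of_nonneg_right hAb (abs_nonneg δ)
      have e2b : 3 * k * M' ^ 2 * |δ| ≤ 3 * k * M' ^ 2 * (Δ / al * K * M') :=
        mul_le_mul_of_nonneg_left hvδ h3k
      linarith
    have e3 : 3 * k * M' ^ 2 * (Δ / al * K * M') ≤ k * M' ^ 3 * (3 * K * β / al) := by
      have h1 : 3 * k * M' ^ 2 * (Δ / al * K * M') = (3 * k * M' ^ 3 * K / al) * Δ := by ring
      have h2 : k * M' ^ 3 * (3 * K * β / al) = (3 * k * M' ^ 3 * K / al) * β := by ring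
      rw [h1, h2]
      exact mul_le_mul_of_nonneg_left hΔβ (by positivity)
    have hsqΔ : (al / (5 * K)) ^ 2 ≤ Δ ^ 2 := by
      have h0 : (0:ℝ) ≤ al / (5 * K) := by positivity
      nlinarith [hlarge]
    have hCs : C * (al / (5 * K)) ^ 2 ≤ C * Δ ^ 2 := mul_le_mul_of_nonneg_left hsqΔ hC0
    have huk : k * u ^ q ≤ k * M' ^ 3 := mul_le_mul_of_nonneg_left huq hk.le
    linarith [huk, e1, e2, e3, hC1, hCs, mul_nonneg hk.le hvq]

lemma Iinf_le {a b c ω p r : ℝ}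
    (hB : BddBelow {r : ℝ | ∃ ψ v : ℝ → ℝ, InH1 ψ ∧ InH1 v ∧ Gfun p ψ v = -1 ∧
      r = Ifun a b c ω ψ v})
    (hr : r ∈ {r : ℝ | ∃ ψ v : ℝ → ℝ, InH1 ψ ∧ InH1 v ∧ Gfun p ψ v = -1 ∧
      r = Ifun a b c ω ψ v}) :
    Iinf a b c ω p ≤ r := by
  unfold Iinf
  exact csInf_le hB hr

end AuxLemmas

set_option maxHeartbeats 2000000 in
/-- Two-sided comparison estimates for `d(ω)` on compact
subintervals of `(0, min{1, √(ac)/b})`. -/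
theorem d_comparison_estimates
    (a b c p α β : ℝ) (p₁ p₂ : ℕ)
    (ha : a < 0) (hb : 0 < b) (hc : c < 0) (hrel : 2 * b < -a - c)
    (hp₁ : Odd p₁) (hp₂ : Odd p₂) (hcop : Nat.Coprime p₁ p₂)
    (hpval : p = (p₁ : ℝ) / (p₂ : ℝ)) (hp1 : 1 ≤ p)
    (hα : 0 < α) (hαβ : α ≤ β) (hβ : β < min 1 (Real.sqrt (a * c) / b)) :
    ∃ C > (0 : ℝ), ∀ ω₁ ω₂ : ℝ, α ≤ ω₁ → ω₁ < ω₂ → ω₂ ≤ β →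
      ∀ pv₁ ∈ Gset a b c ω₁ p, ∀ pv₂ ∈ Gset a b c ω₂ p,
        dfun a b c p ω₁ ≤ dfun a b c p ω₂
          - (1 / 2) * (2 / (p + 2)) ^ ((2 : ℝ) / p)
            * (Ifun a b c ω₂ pv₂.1 pv₂.2) ^ ((2 : ℝ) / p)
            * ((ω₂ - ω₁) / ω₂) * I2fun b ω₂ pv₂.1 pv₂.2
          + C * (ω₂ - ω₁) ^ 2 ∧
        dfun a b c p ω₂ ≤ dfun a b c p ω₁
          + (1 / 2) * (2 / (p + 2)) ^ ((2 : ℝ) / p)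
            * (Ifun a b c ω₁ pv₁.1 pv₁.2) ^ ((2 : ℝ) / p)
            * ((ω₂ - ω₁) / ω₁) * I2fun b ω₁ pv₁.1 pv₁.2
          + C * (ω₂ - ω₁) ^ 2 := by
  have hp0 : (0:ℝ) < p := lt_of_lt_of_le one_pos hp1
  have hβ1 : β < 1 := lt_of_lt_of_le hβ (min_le_left _ _)
  have hβpos : 0 < β := lt_of_lt_of_le hα hαβ
  have hac : 0 < a * c := mul_pos_of_neg_of_neg ha hc
  have hna : (0:ℝ) < -a := by linarith
  have hnc : (0:ℝ) < -c := by linarith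
  have hsq : Real.sqrt (a * c) ^ 2 = a * c := Real.sq_sqrt hac.le
  have hs0 : 0 < Real.sqrt (a * c) := Real.sqrt_pos.mpr hac
  have hβb : β * b < Real.sqrt (a * c) := by
    have h1 : β < Real.sqrt (a * c) / b := lt_of_lt_of_le hβ (min_le_right _ _)
    calc β * b < (Real.sqrt (a * c) / b) * b := mul_lt_mul_of_pos_right h1 hb
      _ = Real.sqrt (a * c) := by field_simp
  obtain ⟨t, htdef⟩ : ∃ t : ℝ, t = Real.sqrt (a * c) / (-a) := ⟨_, rfl⟩
  have ht : 0 < t := htdef ▸ div_pos hs0 hna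
  have hεX : 0 < -c - β * b * t := by
    rw [htdef, show β * b * (Real.sqrt (a * c) / (-a))
      = (β * b * Real.sqrt (a * c)) / (-a) by ring, sub_pos, div_lt_iff₀ hna]
    nlinarith [mul_lt_mul_of_pos_right hβb hs0]
  have hεY : 0 < -a - β * b / t := by
    have h1 : β * b / t = β * b * (-a) / Real.sqrt (a * c) := by
      rw [htdef]; field_simp
    rw [h1, sub_pos, div_lt_iff₀ hs0]
    nlinarith [mul_lt_mul_of_pos_right hβb hna]
  obtain ⟨ε, hεdef⟩ : ∃ ε : ℝ,
      ε = min (1 - β) (min (-c - β * b * t) (-a - β * b / t)) := ⟨_, rfl⟩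
  have hε : 0 < ε := by rw [hεdef]; exact lt_min (by linarith) (lt_min hεX hεY)
  have hε1 : ε ≤ 1 - β := hεdef ▸ min_le_left _ _
  have hε2 : ε ≤ -c - β * b * t :=
    hεdef ▸ le_trans (min_le_right _ _) (min_le_left _ _)
  have hε3 : ε ≤ -a - β * b / t :=
    hεdef ▸ le_trans (min_le_right _ _) (min_le_right _ _)
  obtain ⟨K, hKdef⟩ : ∃ K : ℝ, K = β * max 1 b / ε := ⟨_, rfl⟩
  have hK : 0 < K := by
    rw [hKdef]
    exact div_pos (mul_pos hβpos (lt_of_lt_of_le one_pos (le_max_left 1 b))) hε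
  have hKε : K * ε = β * max 1 b := by rw [hKdef]; field_simp
  have hcoer : ∀ ω : ℝ, 0 ≤ ω → ω ≤ β → ∀ ψ v : ℝ → ℝ, InH1 ψ → InH1 v →
      ε * XnormSq ψ v ≤ Ifun a b c ω ψ v := fun ω hω0 hωβ ψ v hψ hv =>
    coercive hb ht hε1 hε2 hε3 hω0 hωβ hψ hv
  have hIfun_nonneg : ∀ ω : ℝ, 0 ≤ ω → ω ≤ β → ∀ ψ v : ℝ → ℝ, InH1 ψ → InH1 v →
      0 ≤ Ifun a b c ω ψ v := fun ω h0 hβ' ψ v hψ hv =>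
    le_trans (mul_nonneg hε.le (XnormSq_nonneg ψ v)) (hcoer ω h0 hβ' ψ v hψ hv)
  have hBdd : ∀ ω : ℝ, 0 ≤ ω → ω ≤ β →
      BddBelow {r : ℝ | ∃ ψ v : ℝ → ℝ, InH1 ψ ∧ InH1 v ∧ Gfun p ψ v = -1 ∧
        r = Ifun a b c ω ψ v} := by
    intro ω h0 hβ'
    refine ⟨0, ?_⟩
    rintro r ⟨ψ, v, hψ, hv, -, rfl⟩
    exact hIfun_nonneg ω h0 hβ' ψ v hψ hv
  have hI2K : ∀ ω : ℝ, 0 ≤ ω → ω ≤ β → ∀ ψ v : ℝ → ℝ, InH1 ψ → InH1 v →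
      |I2fun b ω ψ v| ≤ K * Ifun a b c ω ψ v := by
    intro ω h0 hβ' ψ v hψ hv
    have h1 := I2_bound (β := β) hb h0 hβ' hψ hv
    have h2 : β * max 1 b * XnormSq ψ v = K * (ε * XnormSq ψ v) := by
      rw [← hKε]; ring
    have h3 := mul_le_mul_of_nonneg_left (hcoer ω h0 hβ' ψ v hψ hv) hK.le
    rw [h2] at h1
    linarith
  by_cases hS : ∃ ψ v : ℝ → ℝ, InH1 ψ ∧ InH1 v ∧ Gfun p ψ v = -1
  swap
  · exact ⟨1, one_pos, fun ω₁ ω₂ _ _ _ pv₁ h₁ pv₂ h₂ =>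
      absurd ⟨pv₁.1, pv₁.2, h₁.1, h₁.2.1, h₁.2.2.1⟩ hS⟩
  obtain ⟨ψ₀, v₀, hψ₀, hv₀, hG₀⟩ := hS
  obtain ⟨M, hMdef⟩ : ∃ M : ℝ, M = I1fun a c ψ₀ v₀ + β * |I2fun b 1 ψ₀ v₀| := ⟨_, rfl⟩
  have hMbound : ∀ ω : ℝ, 0 < ω → ω ≤ β → Iinf a b c ω p ≤ M := by
    intro ω h0 hβ'
    have h1 : Iinf a b c ω p ≤ Ifun a b c ω ψ₀ v₀ :=
      Iinf_le (hBdd ω h0.le hβ') ⟨ψ₀, v₀, hψ₀, hv₀, hG₀, rfl⟩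
    have h2 := Ifun_affine a b c ω ψ₀ v₀
    have h3 : ω * I2fun b 1 ψ₀ v₀ ≤ β * |I2fun b 1 ψ₀ v₀| := by
      rcases le_or_gt 0 (I2fun b 1 ψ₀ v₀) with hpos | hneg
      · rw [abs_of_nonneg hpos]
        exact mul_le_mul_of_nonneg_right hβ' hpos
      · have ha1 : ω * I2fun b 1 ψ₀ v₀ ≤ 0 :=
          mul_nonpos_of_nonneg_of_nonpos h0.le hneg.le
        have ha2 : 0 ≤ β * |I2fun b 1 ψ₀ v₀| :=
          mul_nonneg hβpos.le (abs_nonneg _)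
        linarith
    rw [h2] at h1
    rw [hMdef]
    linarith
  obtain ⟨M', hM'def⟩ : ∃ M' : ℝ, M' = |M| + 1 := ⟨_, rfl⟩
  have hM'1 : 1 ≤ M' := by rw [hM'def]; linarith [abs_nonneg M]
  have hM'0 : 0 < M' := lt_of_lt_of_le one_pos hM'1
  have hMM' : M ≤ M' := by rw [hM'def]; linarith [le_abs_self M]
  obtain ⟨q, hqdef⟩ : ∃ q : ℝ, q = (p + 2) / p := ⟨_, rfl⟩
  have hq1 : 1 ≤ q := by rw [hqdef, le_div_iff₀ hp0]; linarith
  have hq3 : q ≤ 3 := by rw [hqdef, div_le_iff₀ hp0]; linarith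
  obtain ⟨A, hAdef⟩ : ∃ A : ℝ, A = (2 / (p + 2)) ^ ((2:ℝ) / p) := ⟨_, rfl⟩
  have hA0 : 0 < A := by
    rw [hAdef]; exact Real.rpow_pos_of_pos (by positivity) _
  obtain ⟨k, hkdef⟩ : ∃ k : ℝ, k = p / (2 * (p + 2)) * A := ⟨_, rfl⟩
  have hk0 : 0 < k := by rw [hkdef]; exact mul_pos (by positivity) hA0
  have hkq : k * q = 1 / 2 * A := by
    rw [hkdef, hqdef]; field_simp
  have hd : ∀ ω' : ℝ, dfun a b c p ω' = k * Iinf a b c ω' p ^ q := by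
    intro ω'; unfold dfun; rw [hkdef, hqdef, hAdef]
  obtain ⟨r, hrdef⟩ : ∃ r : ℝ, r = α / (5 * K) := ⟨_, rfl⟩
  have hr0 : 0 < r := by rw [hrdef]; positivity
  obtain ⟨C, hCdef⟩ : ∃ C : ℝ, C = k * M' ^ 3 * (1 + 3 * K * β / α) / r ^ 2
      + 29 * k * (K / α) ^ 2 * M' ^ 3 + 1 := ⟨_, rfl⟩
  have hT1 : 0 < k * M' ^ 3 * (1 + 3 * K * β / α) := by positivity
  have hT2 : 0 ≤ 29 * k * (K / α) ^ 2 * M' ^ 3 := by positivity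
  have hT1' : 0 < k * M' ^ 3 * (1 + 3 * K * β / α) / r ^ 2 :=
    div_pos hT1 (pow_pos hr0 2)
  have hC0 : 0 < C := by rw [hCdef]; linarith
  have hC1 : k * M' ^ 3 * (1 + 3 * K * β / α) ≤ C * (α / (5 * K)) ^ 2 := by
    rw [← hrdef, hCdef]
    have hcancel : k * M' ^ 3 * (1 + 3 * K * β / α) / r ^ 2 * r ^ 2
        = k * M' ^ 3 * (1 + 3 * K * β / α) :=
      div_mul_cancel₀ _ (pow_ne_zero 2 hr0.ne')
    linarith [hcancel, mul_nonneg (by linarith : (0:ℝ) ≤ 29 * k * (K / α) ^ 2 * M' ^ 3 + 1)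
      (sq_nonneg r)]
  have hC2 : 29 * k * (K / α) ^ 2 * M' ^ 3 ≤ C := by rw [hCdef]; linarith
  refine ⟨C, hC0, ?_⟩
  intro ω₁ ω₂ hω₁ h12 hω₂ pv₁ hpv₁ pv₂ hpv₂
  obtain ⟨hψ₁, hv₁, hG₁, hI₁⟩ := hpv₁
  obtain ⟨hψ₂, hv₂, hG₂, hI₂⟩ := hpv₂
  have hω₁0 : 0 < ω₁ := lt_of_lt_of_le hα hω₁
  have hω₂0 : 0 < ω₂ := hω₁0.trans h12
  have hω₁β : ω₁ ≤ β := le_trans (le_of_lt h12) hω₂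
  have hΔ0 : 0 < ω₂ - ω₁ := by linarith
  have hΔβ : ω₂ - ω₁ ≤ β := by linarith
  have hm₁0 : 0 ≤ Iinf a b c ω₁ p :=
    hI₁ ▸ hIfun_nonneg ω₁ hω₁0.le hω₁β pv₁.1 pv₁.2 hψ₁ hv₁
  have hm₂0 : 0 ≤ Iinf a b c ω₂ p :=
    hI₂ ▸ hIfun_nonneg ω₂ hω₂0.le hω₂ pv₂.1 pv₂.2 hψ₂ hv₂
  have hm₁M : Iinf a b c ω₁ p ≤ M' := le_trans (hMbound ω₁ hω₁0 hω₁β) hMM'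
  have hm₂M : Iinf a b c ω₂ p ≤ M' := le_trans (hMbound ω₂ hω₂0 hω₂) hMM'
  have hI2₁ : |I2fun b ω₁ pv₁.1 pv₁.2| ≤ K * Iinf a b c ω₁ p := by
    have h := hI2K ω₁ hω₁0.le hω₁β pv₁.1 pv₁.2 hψ₁ hv₁
    rwa [hI₁] at h
  have hI2₂ : |I2fun b ω₂ pv₂.1 pv₂.2| ≤ K * Iinf a b c ω₂ p := by
    have h := hI2K ω₂ hω₂0.le hω₂ pv₂.1 pv₂.2 hψ₂ hv₂
    rwa [hI₂] at h
  have hcross₁ : Iinf a b c ω₁ p ≤ Iinf a b c ω₂ p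
      + (-((ω₂ - ω₁) / ω₂ * I2fun b ω₂ pv₂.1 pv₂.2)) := by
    have h1 : Iinf a b c ω₁ p ≤ Ifun a b c ω₁ pv₂.1 pv₂.2 :=
      Iinf_le (hBdd ω₁ hω₁0.le hω₁β) ⟨pv₂.1, pv₂.2, hψ₂, hv₂, hG₂, rfl⟩
    have h2 := Ifun_shift a b c ω₁ ω₂ hω₂0.ne' pv₂.1 pv₂.2
    rw [h2, hI₂] at h1
    linarith
  have hcross₂ : Iinf a b c ω₂ p ≤ Iinf a b c ω₁ p
      + (ω₂ - ω₁) / ω₁ * I2fun b ω₁ pv₁.1 pv₁.2 := by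
    have h1 : Iinf a b c ω₂ p ≤ Ifun a b c ω₂ pv₁.1 pv₁.2 :=
      Iinf_le (hBdd ω₂ hω₂0.le hω₂) ⟨pv₁.1, pv₁.2, hψ₁, hv₁, hG₁, rfl⟩
    have h2 := Ifun_shift a b c ω₂ ω₁ hω₁0.ne' pv₁.1 pv₁.2
    rw [h2, hI₁] at h1
    have h3 : (ω₁ - ω₂) / ω₁ * I2fun b ω₁ pv₁.1 pv₁.2
        = -((ω₂ - ω₁) / ω₁ * I2fun b ω₁ pv₁.1 pv₁.2) := by ring
    rw [h3] at h1
    linarith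
  have hdivle : (ω₂ - ω₁) / ω₂ ≤ (ω₂ - ω₁) / α := by
    rw [div_le_div_iff₀ hω₂0 hα]
    have := mul_le_mul_of_nonneg_left (le_trans hω₁ h12.le) hΔ0.le
    linarith
  have hdivle₁ : (ω₂ - ω₁) / ω₁ ≤ (ω₂ - ω₁) / α := by
    rw [div_le_div_iff₀ hω₁0 hα]
    have := mul_le_mul_of_nonneg_left hω₁ hΔ0.le
    linarith
  have hδ₂abs : |(-((ω₂ - ω₁) / ω₂ * I2fun b ω₂ pv₂.1 pv₂.2))|
      ≤ (ω₂ - ω₁) / α * K * Iinf a b c ω₂ p := by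
    rw [abs_neg, abs_mul, abs_of_pos (div_pos hΔ0 hω₂0)]
    calc (ω₂ - ω₁) / ω₂ * |I2fun b ω₂ pv₂.1 pv₂.2|
        ≤ (ω₂ - ω₁) / α * |I2fun b ω₂ pv₂.1 pv₂.2| :=
          mul_le_mul_of_nonneg_right hdivle (abs_nonneg _)
      _ ≤ (ω₂ - ω₁) / α * (K * Iinf a b c ω₂ p) :=
          mul_le_mul_of_nonneg_left hI2₂ (by positivity)
      _ = (ω₂ - ω₁) / α * K * Iinf a b c ω₂ p := by ring
  have hδ₁abs : |(ω₂ - ω₁) / ω₁ * I2fun b ω₁ pv₁.1 pv₁.2|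
      ≤ (ω₂ - ω₁) / α * K * Iinf a b c ω₁ p := by
    rw [abs_mul, abs_of_pos (div_pos hΔ0 hω₁0)]
    calc (ω₂ - ω₁) / ω₁ * |I2fun b ω₁ pv₁.1 pv₁.2|
        ≤ (ω₂ - ω₁) / α * |I2fun b ω₁ pv₁.1 pv₁.2| :=
          mul_le_mul_of_nonneg_right hdivle₁ (abs_nonneg _)
      _ ≤ (ω₂ - ω₁) / α * (K * Iinf a b c ω₁ p) :=
          mul_le_mul_of_nonneg_left hI2₁ (by positivity)
      _ = (ω₂ - ω₁) / α * K * Iinf a b c ω₁ p := by ring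
  have hcore₁ := core_est hk0 hq1 hq3 hα hK hM'1 hβpos hm₁0 hm₂0 hm₂M hm₁M hΔ0 hΔβ
    hcross₁ hδ₂abs hC0.le hC1 hC2
  have hcore₂ := core_est hk0 hq1 hq3 hα hK hM'1 hβpos hm₂0 hm₁0 hm₁M hm₂M hΔ0 hΔβ
    hcross₂ hδ₁abs hC0.le hC1 hC2
  have hexp2 : (2:ℝ) / p = q - 1 := by rw [hqdef]; field_simp; ring
  constructor
  · rw [hd ω₁, hd ω₂, hI₂, ← hAdef, hexp2]
    have hbr : k * q * Iinf a b c ω₂ p ^ (q - 1)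
          * (-((ω₂ - ω₁) / ω₂ * I2fun b ω₂ pv₂.1 pv₂.2))
        = -(1 / 2 * A * Iinf a b c ω₂ p ^ (q - 1) * ((ω₂ - ω₁) / ω₂)
          * I2fun b ω₂ pv₂.1 pv₂.2) := by
      rw [hkq]; ring
    linarith [hcore₁, hbr.le, hbr.ge]
  · rw [hd ω₂, hd ω₁, hI₁, ← hAdef, hexp2]
    have hbr : k * q * Iinf a b c ω₁ p ^ (q - 1)
          * ((ω₂ - ω₁) / ω₁ * I2fun b ω₁ pv₁.1 pv₁.2)
        = 1 / 2 * A * Iinf a b c ω₁ p ^ (q - 1) * ((ω₂ - ω₁) / ω₁)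
          * I2fun b ω₁ pv₁.1 pv₁.2 := by
      rw [hkq]; ring
    linarith [hcore₂, hbr.le, hbr.ge]


end
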